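/- arXiv:2202.07194 — 2 statements merged into one kernel-verified Lean document; each statement's English description precedes it below -/
import Mathlib

section
/- For θ ≥ c_u, Ψ_ε(θ) = 1/2 + 1/(2C_ε) + (ασ/(1−α))·(1/(C_ε(c_u−c_l)))·(exp(((1−α)/σ)(c_l−θ)) − exp(((1−α)/σ)(c_u−θ))), its derivative is strictly positive and bounded by α/(C_ε(c_u−c_l)), and its second derivative is strictly negative with absolute value bounded by α(1−α)/(σ C_ε(c_u−c_l)). -/
open MeasureTheory Set Real

lemma expIoiInt (a : ℝ) {c : ℝ} (hc : 0 < c) :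
    IntegrableOn (fun y : ℝ => Real.exp (-(c*y))) (Set.Ioi a) := by
  simpa [neg_mul] using exp_neg_integrableOn_Ioi a hc

lemma expIoi (a : ℝ) {c : ℝ} (hc : 0 < c) :
    ∫ y in Set.Ioi a, Real.exp (-(c*y)) = Real.exp (-(c*a))/c := by
  have := integral_comp_mul_left_Ioi (fun x => Real.exp (-x)) a hc
  simp only [smul_eq_mul] at this
  rw [this, integral_exp_neg_Ioi]
  rw [div_eq_inv_mul]

lemma expIicInt (a : ℝ) {c : ℝ} (hc : 0 < c) :
    IntegrableOn (fun y : ℝ => Real.exp (c*y)) (Set.Iic a) := by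
  have A : MeasurableEmbedding (fun x : ℝ => -x) :=
    (Homeomorph.neg ℝ).isClosedEmbedding.measurableEmbedding
  have h2 : IntegrableOn (fun y : ℝ => Real.exp (-(c*y))) (Set.Ici (-a)) := by
    rw [integrableOn_Ici_iff_integrableOn_Ioi]
    exact expIoiInt (-a) hc
  rw [IntegrableOn, ← Measure.map_neg_eq_self (volume : Measure ℝ),
    Measure.restrict_map A.measurable measurableSet_Iic, A.integrable_map_iff]
  have hs : (fun x : ℝ => -x) ⁻¹' Set.Iic a = Set.Ici (-a) := by
    ext x; simp [neg_le]
  rw [hs]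
  refine h2.congr_fun (fun x _ => ?_) measurableSet_Ici
  simp [Function.comp, mul_comm]

lemma expIic (a : ℝ) {c : ℝ} (hc : 0 < c) :
    ∫ y in Set.Iic a, Real.exp (c*y) = Real.exp (c*a)/c := by
  have := integral_comp_neg_Iic a (fun x => Real.exp (-(c*x)))
  simp only [neg_neg, mul_neg] at this
  rw [show (fun y : ℝ => Real.exp (c*y)) = (fun x : ℝ => Real.exp (-(c * -x))) by ext x; ring_nf]
  rw [show (∫ x in Set.Iic a, Real.exp (-(c * -x))) = ∫ x in Set.Ioi (-a), Real.exp (-(c*x)) from by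
    simpa using integral_comp_neg_Iic a (fun x => Real.exp (-(c*x)))]
  rw [expIoi (-a) hc]
  ring_nf

lemma intervalIntegral_affine_exp (a b l r : ℝ) {c : ℝ} (hc : c ≠ 0) :
    ∫ y in l..r, (a + b*y) * Real.exp (c*y)
      = ((a*c-b)/c^2 + (b/c)*r) * Real.exp (c*r) - ((a*c-b)/c^2 + (b/c)*l) * Real.exp (c*l) := by
  have key : ∀ y : ℝ, HasDerivAt (fun t => ((a*c-b)/c^2 + (b/c)*t) * Real.exp (c*t))
      ((a + b*y) * Real.exp (c*y)) y := by
    intro y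
    have h1 : HasDerivAt (fun t : ℝ => (a*c-b)/c^2 + (b/c)*t) (b/c) y := by
      simpa using ((hasDerivAt_id y).const_mul (b/c)).const_add ((a*c-b)/c^2)
    have h2 : HasDerivAt (fun t : ℝ => Real.exp (c*t)) (c * Real.exp (c*y)) y := by
      simpa [mul_comm] using ((hasDerivAt_id y).const_mul c).exp
    have := h1.mul h2
    refine this.congr_deriv ?_
    field_simp
    ring
  have hcont : Continuous (fun y : ℝ => (a + b*y) * Real.exp (c*y)) := by continuity
  exact intervalIntegral.integral_eq_sub_of_hasDerivAt (fun y _ => key y)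
    (hcont.intervalIntegrable l r)

lemma intervalIntegral_exp_mul (l r : ℝ) {c : ℝ} (hc : c ≠ 0) :
    ∫ y in l..r, Real.exp (c*y) = Real.exp (c*r)/c - Real.exp (c*l)/c := by
  have key : ∀ y : ℝ, HasDerivAt (fun t => Real.exp (c*t)/c) (Real.exp (c*y)) y := by
    intro y
    have h2 : HasDerivAt (fun t : ℝ => Real.exp (c*t)) (c * Real.exp (c*y)) y := by
      simpa [mul_comm] using ((hasDerivAt_id y).const_mul c).exp
    simpa [mul_comm, hc] using h2.div_const c
  exact intervalIntegral.integral_eq_sub_of_hasDerivAt (fun y _ => key y)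
    ((by continuity : Continuous fun y : ℝ => Real.exp (c*y)).intervalIntegrable l r)


/-- Check loss for the `α`-quantile. -/
noncomputable def checkLoss (α τ : ℝ) : ℝ := if τ ≤ 0 then (α - 1) * τ else α * τ

/-- Density of the asymmetric Laplace distribution with parameters `(α, θ, σ)`. -/
noncomputable def aLap (α θ σ y : ℝ) : ℝ :=
  α * (1 - α) / σ * Real.exp (-(checkLoss α ((y - θ) / σ)))

/-- Bit-flip probability of outputting `1` on input `v ∈ [c_l, c_u]`. -/
noncomputable def bitp (ε cl cu v : ℝ) : ℝ :=
  1/2 + (v - (cu + cl)/2) / ((cu - cl) * ((Real.exp ε + 1) / (Real.exp ε - 1)))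

/-- Truncation of `y` into `[c_l, c_u]`. -/
noncomputable def trunc (cl cu y : ℝ) : ℝ :=
  if y ≤ cl then cl else if y ≥ cu then cu else y

/-- `Ψ_ε(θ)`: probability that the bit flip of the truncated asymmetric Laplace
variable with location `θ` outputs `1`. -/
noncomputable def Psi (α σ ε cl cu θ : ℝ) : ℝ :=
  ∫ y : ℝ, bitp ε cl cu (trunc cl cu y) * aLap α θ σ y

lemma trunc_left {cl cu y : ℝ} (h : y ≤ cl) : trunc cl cu y = cl := by
  unfold trunc; rw [if_pos h]

lemma trunc_mid {cl cu y : ℝ} (h1 : cl < y) (h2 : y ≤ cu) : trunc cl cu y = y := by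
  unfold trunc
  rw [if_neg (not_le.mpr h1)]
  by_cases h : y ≥ cu
  · rw [if_pos h]; exact le_antisymm h h2
  · rw [if_neg h]

lemma trunc_right {cl cu y : ℝ} (hcl : cl < cu) (h : cu ≤ y) : trunc cl cu y = cu := by
  unfold trunc
  rw [if_neg (by push_neg; linarith), if_pos h]

lemma aLap_left {α σ θ y : ℝ} (hσ : 0 < σ) (h : y ≤ θ) :
    aLap α θ σ y = α * (1 - α) / σ * Real.exp (((1-α)/σ) * (y - θ)) := by
  unfold aLap checkLoss
  rw [if_pos (div_nonpos_of_nonpos_of_nonneg (by linarith) hσ.le)]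
  congr 1
  field_simp
  ring

lemma aLap_right {α σ θ y : ℝ} (hσ : 0 < σ) (h : θ < y) :
    aLap α θ σ y = α * (1 - α) / σ * Real.exp (-((α/σ) * (y - θ))) := by
  unfold aLap checkLoss
  rw [if_neg (by push_neg; exact div_pos (by linarith) hσ)]
  congr 1
  field_simp

noncomputable def Faux (α σ ε cl cu θ : ℝ) : ℝ :=
  1/2 + 1 / (2 * ((Real.exp ε + 1) / (Real.exp ε - 1)))
  + (α * σ / (1 - α)) * (1 / (((Real.exp ε + 1) / (Real.exp ε - 1)) * (cu - cl))) *
    (Real.exp (((1 - α) / σ) * (cl - θ)) - Real.exp (((1 - α) / σ) * (cu - θ)))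

set_option maxHeartbeats 1000000 in
lemma L1 {α σ ε cl cu : ℝ} (θ : ℝ) (hα : α ∈ Set.Ioo (0:ℝ) 1) (hσ : 0 < σ)
    (hε : 0 < ε) (hcl : cl < cu) (hθ : cu ≤ θ) :
    Psi α σ ε cl cu θ = Faux α σ ε cl cu θ := by
  obtain ⟨hα0, hα1⟩ := hα
  have hβ : 0 < (1-α)/σ := div_pos (by linarith) hσ
  have hγ : 0 < α/σ := div_pos hα0 hσ
  have hexpε : 1 < Real.exp ε := by
    rw [← Real.exp_zero]; exact Real.exp_lt_exp.mpr hε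
  have h6 : σ ≠ 0 := hσ.ne'
  have h7 : (1:ℝ) - α ≠ 0 := by linarith
  have h8 : α ≠ 0 := hα0.ne'
  have hEθ : Real.exp (((1-α)/σ)*θ) ≠ 0 := Real.exp_ne_zero _
  set h : ℝ → ℝ := fun y => bitp ε cl cu (trunc cl cu y) * aLap α θ σ y with hh
  -- region 1 : Iic cl
  have e1 : Set.EqOn h (fun y => (bitp ε cl cu cl * (α*(1-α)/σ) / Real.exp (((1-α)/σ)*θ))
      * Real.exp (((1-α)/σ)*y)) (Set.Iic cl) := by
    intro y hy
    simp only [hh, trunc_left hy, aLap_left hσ (le_trans hy (le_trans hcl.le hθ))]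
    rw [show ((1-α)/σ)*(y-θ) = ((1-α)/σ)*y - ((1-α)/σ)*θ by ring, Real.exp_sub]
    ring
  have int1 : MeasureTheory.IntegrableOn h (Set.Iic cl) :=
    MeasureTheory.IntegrableOn.congr_fun ((expIicInt cl hβ).const_mul _) e1.symm measurableSet_Iic
  have i1 : ∫ y in Set.Iic cl, h y
      = bitp ε cl cu cl * α * (Real.exp (((1-α)/σ)*cl) / Real.exp (((1-α)/σ)*θ)) := by
    rw [MeasureTheory.setIntegral_congr_fun measurableSet_Iic e1,
      MeasureTheory.integral_const_mul, expIic cl hβ]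
    field_simp
  -- region 2 : Ioc cl cu
  set a1 : ℝ := 1/2 - ((cu+cl)/2)/((cu-cl)*((Real.exp ε + 1) / (Real.exp ε - 1))) with ha1
  set b1 : ℝ := 1/((cu-cl)*((Real.exp ε + 1) / (Real.exp ε - 1))) with hb1
  have e2 : Set.EqOn h (fun y => ((α*(1-α)/σ) / Real.exp (((1-α)/σ)*θ))
      * ((a1 + b1*y) * Real.exp (((1-α)/σ)*y))) (Set.Ioc cl cu) := by
    intro y hy
    simp only [hh, trunc_mid hy.1 hy.2, aLap_left hσ (le_trans hy.2 hθ)]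
    rw [show ((1-α)/σ)*(y-θ) = ((1-α)/σ)*y - ((1-α)/σ)*θ by ring, Real.exp_sub]
    unfold bitp
    rw [ha1, hb1]
    ring
  have int2 : MeasureTheory.IntegrableOn h (Set.Ioc cl cu) := by
    refine MeasureTheory.IntegrableOn.congr_fun ?_ e2.symm measurableSet_Ioc
    exact ((by continuity : Continuous fun y : ℝ =>
      ((α*(1-α)/σ) / Real.exp (((1-α)/σ)*θ)) * ((a1 + b1*y) * Real.exp (((1-α)/σ)*y))).integrableOn_Ioc)
  have i2 : ∫ y in Set.Ioc cl cu, h y =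
      α * ((a1 + b1*cu - b1*σ/(1-α)) * Real.exp (((1-α)/σ)*cu)
         - (a1 + b1*cl - b1*σ/(1-α)) * Real.exp (((1-α)/σ)*cl)) / Real.exp (((1-α)/σ)*θ) := by
    rw [MeasureTheory.setIntegral_congr_fun measurableSet_Ioc e2,
      MeasureTheory.integral_const_mul, ← intervalIntegral.integral_of_le hcl.le,
      intervalIntegral_affine_exp a1 b1 cl cu hβ.ne']
    field_simp
    ring
  -- region 3 : Ioc cu θ
  have e3 : Set.EqOn h (fun y => (bitp ε cl cu cu * (α*(1-α)/σ) / Real.exp (((1-α)/σ)*θ))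
      * Real.exp (((1-α)/σ)*y)) (Set.Ioc cu θ) := by
    intro y hy
    simp only [hh, trunc_right hcl hy.1.le, aLap_left hσ hy.2]
    rw [show ((1-α)/σ)*(y-θ) = ((1-α)/σ)*y - ((1-α)/σ)*θ by ring, Real.exp_sub]
    ring
  have int3 : MeasureTheory.IntegrableOn h (Set.Ioc cu θ) := by
    refine MeasureTheory.IntegrableOn.congr_fun ?_ e3.symm measurableSet_Ioc
    exact ((by continuity : Continuous fun y : ℝ =>
      (bitp ε cl cu cu * (α*(1-α)/σ) / Real.exp (((1-α)/σ)*θ)) * Real.exp (((1-α)/σ)*y)).integrableOn_Ioc)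
  have i3 : ∫ y in Set.Ioc cu θ, h y = bitp ε cl cu cu * α *
      ((Real.exp (((1-α)/σ)*θ) - Real.exp (((1-α)/σ)*cu)) / Real.exp (((1-α)/σ)*θ)) := by
    rw [MeasureTheory.setIntegral_congr_fun measurableSet_Ioc e3,
      MeasureTheory.integral_const_mul, ← intervalIntegral.integral_of_le hθ,
      intervalIntegral_exp_mul cu θ hβ.ne']
    field_simp
  -- region 4 : Ioi θ
  have e4 : Set.EqOn h (fun y => (bitp ε cl cu cu * (α*(1-α)/σ) * Real.exp ((α/σ)*θ))
      * Real.exp (-((α/σ)*y))) (Set.Ioi θ) := by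
    intro y hy
    simp only [hh, trunc_right hcl (le_trans hθ (le_of_lt hy)), aLap_right hσ hy]
    rw [show -((α/σ)*(y-θ)) = (α/σ)*θ + -((α/σ)*y) by ring, Real.exp_add]
    ring
  have int4 : MeasureTheory.IntegrableOn h (Set.Ioi θ) :=
    MeasureTheory.IntegrableOn.congr_fun ((expIoiInt θ hγ).const_mul _) e4.symm measurableSet_Ioi
  have i4 : ∫ y in Set.Ioi θ, h y = bitp ε cl cu cu * (1-α) := by
    rw [MeasureTheory.setIntegral_congr_fun measurableSet_Ioi e4,
      MeasureTheory.integral_const_mul, expIoi θ hγ, Real.exp_neg]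
    have : Real.exp ((α/σ)*θ) ≠ 0 := Real.exp_ne_zero _
    field_simp
  -- assemble
  have intIoicu : MeasureTheory.IntegrableOn h (Set.Ioi cu) := by
    rw [← Set.Ioc_union_Ioi_eq_Ioi hθ]; exact int3.union int4
  have intIoicl : MeasureTheory.IntegrableOn h (Set.Ioi cl) := by
    rw [← Set.Ioc_union_Ioi_eq_Ioi hcl.le]; exact int2.union intIoicu
  have split3 : ∫ y in Set.Ioi cu, h y = (∫ y in Set.Ioc cu θ, h y) + ∫ y in Set.Ioi θ, h y := by
    rw [← MeasureTheory.setIntegral_union (Set.Ioc_disjoint_Ioi le_rfl) measurableSet_Ioi int3 int4,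
      Set.Ioc_union_Ioi_eq_Ioi hθ]
  have split2 : ∫ y in Set.Ioi cl, h y = (∫ y in Set.Ioc cl cu, h y) + ∫ y in Set.Ioi cu, h y := by
    rw [← MeasureTheory.setIntegral_union (Set.Ioc_disjoint_Ioi le_rfl) measurableSet_Ioi int2 intIoicu,
      Set.Ioc_union_Ioi_eq_Ioi hcl.le]
  have split1 : Psi α σ ε cl cu θ = (∫ y in Set.Iic cl, h y) + ∫ y in Set.Ioi cl, h y := by
    unfold Psi
    exact (intervalIntegral.integral_Iic_add_Ioi int1 intIoicl).symm
  rw [split1, split2, split3, i1, i2, i3, i4]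
  unfold Faux bitp
  rw [ha1, hb1,
    show ((1-α)/σ) * (cl - θ) = ((1-α)/σ)*cl - ((1-α)/σ)*θ by ring, Real.exp_sub,
    show ((1-α)/σ) * (cu - θ) = ((1-α)/σ)*cu - ((1-α)/σ)*θ by ring, Real.exp_sub]
  have h3 : Real.exp ε - 1 ≠ 0 := by linarith
  have h4 : Real.exp ε + 1 ≠ 0 := by positivity
  have h5 : cu - cl ≠ 0 := by linarith
  set C : ℝ := (Real.exp ε + 1)/(Real.exp ε - 1) with hC
  have hC0 : C ≠ 0 := by
    rw [hC]; exact div_ne_zero h4 h3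
  have hEθ0 : Real.exp (((1-α)/σ)*θ) ≠ 0 := Real.exp_ne_zero _
  set Ecl := Real.exp (((1-α)/σ)*cl) with hEcl
  set Ecu := Real.exp (((1-α)/σ)*cu) with hEcu
  set Eθ := Real.exp (((1-α)/σ)*θ) with hEθd
  clear_value Ecl Ecu Eθ C a1 b1
  clear hh e1 int1 i1 e2 int2 i2 e3 int3 i3 e4 int4 intIoicu intIoicl split1 split2 split3
  clear hEθ hβ hγ hexpε hθ hcl hσ hε hEcl hEcu hEθd hC ha1 hb1 hα0 hα1
  field_simp
  ring

noncomputable def Gaux (α σ ε cl cu θ : ℝ) : ℝ :=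
  1/2 + (θ - (cu+cl)/2)/((cu-cl) * ((Real.exp ε + 1) / (Real.exp ε - 1)))
  + (1/((cu-cl) * ((Real.exp ε + 1) / (Real.exp ε - 1)))) *
    ( σ*(1-α)/α - σ*α/(1-α)
      + (σ*α/(1-α)) * Real.exp (((1-α)/σ)*(cl-θ))
      - (σ*(1-α)/α) * Real.exp ((α/σ)*(θ-cu)) )

set_option maxHeartbeats 1000000 in
lemma L2 {α σ ε cl cu : ℝ} (θ : ℝ) (hα : α ∈ Set.Ioo (0:ℝ) 1) (hσ : 0 < σ)
    (hε : 0 < ε) (hcl : cl < cu) (hclθ : cl ≤ θ) (hθcu : θ ≤ cu) :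
    Psi α σ ε cl cu θ = Gaux α σ ε cl cu θ := by
  obtain ⟨hα0, hα1⟩ := hα
  have hβ : 0 < (1-α)/σ := div_pos (by linarith) hσ
  have hγ : 0 < α/σ := div_pos hα0 hσ
  have hexpε : 1 < Real.exp ε := by
    rw [← Real.exp_zero]; exact Real.exp_lt_exp.mpr hε
  have h6 : σ ≠ 0 := hσ.ne'
  have h7 : (1:ℝ) - α ≠ 0 := by linarith
  have h8 : α ≠ 0 := hα0.ne'
  set h : ℝ → ℝ := fun y => bitp ε cl cu (trunc cl cu y) * aLap α θ σ y with hh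
  -- region 1 : Iic cl
  have e1 : Set.EqOn h (fun y => (bitp ε cl cu cl * (α*(1-α)/σ) / Real.exp (((1-α)/σ)*θ))
      * Real.exp (((1-α)/σ)*y)) (Set.Iic cl) := by
    intro y hy
    simp only [hh, trunc_left hy, aLap_left hσ (le_trans hy hclθ)]
    rw [show ((1-α)/σ)*(y-θ) = ((1-α)/σ)*y - ((1-α)/σ)*θ by ring, Real.exp_sub]
    ring
  have int1 : MeasureTheory.IntegrableOn h (Set.Iic cl) :=
    MeasureTheory.IntegrableOn.congr_fun ((expIicInt cl hβ).const_mul _) e1.symm measurableSet_Iic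
  have i1 : ∫ y in Set.Iic cl, h y
      = bitp ε cl cu cl * α * (Real.exp (((1-α)/σ)*cl) / Real.exp (((1-α)/σ)*θ)) := by
    rw [MeasureTheory.setIntegral_congr_fun measurableSet_Iic e1,
      MeasureTheory.integral_const_mul, expIic cl hβ]
    have : Real.exp (((1-α)/σ)*θ) ≠ 0 := Real.exp_ne_zero _
    field_simp
  -- region 2 : Ioc cl θ
  set a1 : ℝ := 1/2 - ((cu+cl)/2)/((cu-cl)*((Real.exp ε + 1) / (Real.exp ε - 1))) with ha1
  set b1 : ℝ := 1/((cu-cl)*((Real.exp ε + 1) / (Real.exp ε - 1))) with hb1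
  have e2 : Set.EqOn h (fun y => ((α*(1-α)/σ) / Real.exp (((1-α)/σ)*θ))
      * ((a1 + b1*y) * Real.exp (((1-α)/σ)*y))) (Set.Ioc cl θ) := by
    intro y hy
    simp only [hh, trunc_mid hy.1 (le_trans hy.2 hθcu), aLap_left hσ hy.2]
    rw [show ((1-α)/σ)*(y-θ) = ((1-α)/σ)*y - ((1-α)/σ)*θ by ring, Real.exp_sub]
    unfold bitp
    rw [ha1, hb1]
    ring
  have int2 : MeasureTheory.IntegrableOn h (Set.Ioc cl θ) := by
    refine MeasureTheory.IntegrableOn.congr_fun ?_ e2.symm measurableSet_Ioc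
    exact ((by continuity : Continuous fun y : ℝ =>
      ((α*(1-α)/σ) / Real.exp (((1-α)/σ)*θ)) * ((a1 + b1*y) * Real.exp (((1-α)/σ)*y))).integrableOn_Ioc)
  have i2 : ∫ y in Set.Ioc cl θ, h y =
      α * ((a1 + b1*θ - b1*σ/(1-α)) * Real.exp (((1-α)/σ)*θ)
         - (a1 + b1*cl - b1*σ/(1-α)) * Real.exp (((1-α)/σ)*cl)) / Real.exp (((1-α)/σ)*θ) := by
    rw [MeasureTheory.setIntegral_congr_fun measurableSet_Ioc e2,
      MeasureTheory.integral_const_mul, ← intervalIntegral.integral_of_le hclθ,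
      intervalIntegral_affine_exp a1 b1 cl θ hβ.ne']
    have : Real.exp (((1-α)/σ)*θ) ≠ 0 := Real.exp_ne_zero _
    field_simp
    ring
  -- region 3 : Ioc θ cu
  have e3 : Set.EqOn h (fun y => ((α*(1-α)/σ) * Real.exp ((α/σ)*θ))
      * ((a1 + b1*y) * Real.exp ((-(α/σ))*y))) (Set.Ioc θ cu) := by
    intro y hy
    simp only [hh, trunc_mid (lt_of_le_of_lt hclθ hy.1) hy.2, aLap_right hσ hy.1]
    rw [show -((α/σ)*(y-θ)) = (α/σ)*θ + (-(α/σ))*y by ring, Real.exp_add]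
    unfold bitp
    rw [ha1, hb1]
    ring
  have int3 : MeasureTheory.IntegrableOn h (Set.Ioc θ cu) := by
    refine MeasureTheory.IntegrableOn.congr_fun ?_ e3.symm measurableSet_Ioc
    exact ((by continuity : Continuous fun y : ℝ =>
      ((α*(1-α)/σ) * Real.exp ((α/σ)*θ)) * ((a1 + b1*y) * Real.exp ((-(α/σ))*y))).integrableOn_Ioc)
  have i3 : ∫ y in Set.Ioc θ cu, h y =
      (1-α) * ((a1 + b1*θ + b1*σ/α)
        - (a1 + b1*cu + b1*σ/α) * (Real.exp ((α/σ)*θ) / Real.exp ((α/σ)*cu))) := by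
    rw [MeasureTheory.setIntegral_congr_fun measurableSet_Ioc e3,
      MeasureTheory.integral_const_mul, ← intervalIntegral.integral_of_le hθcu,
      intervalIntegral_affine_exp a1 b1 θ cu (neg_ne_zero.mpr hγ.ne')]
    rw [show (-(α/σ))*cu = -((α/σ)*cu) by ring, show (-(α/σ))*θ = -((α/σ)*θ) by ring,
      Real.exp_neg ((α/σ)*cu), Real.exp_neg ((α/σ)*θ)]
    have hc1 : Real.exp ((α/σ)*θ) ≠ 0 := Real.exp_ne_zero _
    have hc2 : Real.exp ((α/σ)*cu) ≠ 0 := Real.exp_ne_zero _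
    set Gθ := Real.exp ((α/σ)*θ)
    set Gcu := Real.exp ((α/σ)*cu)
    clear_value Gθ Gcu
    clear_value a1 b1
    clear hh e1 int1 i1 e2 int2 i2 e3 int3 h
    field_simp
    ring_nf
  -- region 4 : Ioi cu
  have e4 : Set.EqOn h (fun y => (bitp ε cl cu cu * (α*(1-α)/σ) * Real.exp ((α/σ)*θ))
      * Real.exp (-((α/σ)*y))) (Set.Ioi cu) := by
    intro y hy
    simp only [hh, trunc_right hcl (le_of_lt hy), aLap_right hσ (lt_of_le_of_lt hθcu hy)]
    rw [show -((α/σ)*(y-θ)) = (α/σ)*θ + -((α/σ)*y) by ring, Real.exp_add]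
    ring
  have int4 : MeasureTheory.IntegrableOn h (Set.Ioi cu) :=
    MeasureTheory.IntegrableOn.congr_fun ((expIoiInt cu hγ).const_mul _) e4.symm measurableSet_Ioi
  have i4 : ∫ y in Set.Ioi cu, h y
      = bitp ε cl cu cu * (1-α) * (Real.exp ((α/σ)*θ) / Real.exp ((α/σ)*cu)) := by
    rw [MeasureTheory.setIntegral_congr_fun measurableSet_Ioi e4,
      MeasureTheory.integral_const_mul, expIoi cu hγ, Real.exp_neg]
    have hc1 : Real.exp ((α/σ)*θ) ≠ 0 := Real.exp_ne_zero _
    have hc2 : Real.exp ((α/σ)*cu) ≠ 0 := Real.exp_ne_zero _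
    field_simp
  -- assemble
  have intIoiθ : MeasureTheory.IntegrableOn h (Set.Ioi θ) := by
    rw [← Set.Ioc_union_Ioi_eq_Ioi hθcu]; exact int3.union int4
  have intIoicl : MeasureTheory.IntegrableOn h (Set.Ioi cl) := by
    rw [← Set.Ioc_union_Ioi_eq_Ioi hclθ]; exact int2.union intIoiθ
  have split3 : ∫ y in Set.Ioi θ, h y = (∫ y in Set.Ioc θ cu, h y) + ∫ y in Set.Ioi cu, h y := by
    rw [← MeasureTheory.setIntegral_union (Set.Ioc_disjoint_Ioi le_rfl) measurableSet_Ioi int3 int4,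
      Set.Ioc_union_Ioi_eq_Ioi hθcu]
  have split2 : ∫ y in Set.Ioi cl, h y = (∫ y in Set.Ioc cl θ, h y) + ∫ y in Set.Ioi θ, h y := by
    rw [← MeasureTheory.setIntegral_union (Set.Ioc_disjoint_Ioi le_rfl) measurableSet_Ioi int2 intIoiθ,
      Set.Ioc_union_Ioi_eq_Ioi hclθ]
  have split1 : Psi α σ ε cl cu θ = (∫ y in Set.Iic cl, h y) + ∫ y in Set.Ioi cl, h y := by
    unfold Psi
    exact (intervalIntegral.integral_Iic_add_Ioi int1 intIoicl).symm
  rw [split1, split2, split3, i1, i2, i3, i4]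
  unfold Gaux bitp
  rw [ha1, hb1,
    show ((1-α)/σ) * (cl - θ) = ((1-α)/σ)*cl - ((1-α)/σ)*θ by ring, Real.exp_sub,
    show (α/σ) * (θ - cu) = (α/σ)*θ - (α/σ)*cu by ring, Real.exp_sub]
  have h3 : Real.exp ε - 1 ≠ 0 := by linarith
  have h4 : Real.exp ε + 1 ≠ 0 := by positivity
  have h5 : cu - cl ≠ 0 := by linarith
  set C : ℝ := (Real.exp ε + 1)/(Real.exp ε - 1) with hC
  have hC0 : C ≠ 0 := by
    rw [hC]; exact div_ne_zero h4 h3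
  have hE1 : Real.exp (((1-α)/σ)*θ) ≠ 0 := Real.exp_ne_zero _
  have hE2 : Real.exp ((α/σ)*cu) ≠ 0 := Real.exp_ne_zero _
  set Ecl := Real.exp (((1-α)/σ)*cl) with hEcl
  set Eθ := Real.exp (((1-α)/σ)*θ) with hEθd
  set Gθ := Real.exp ((α/σ)*θ) with hGθ
  set Gcu := Real.exp ((α/σ)*cu) with hGcu
  clear_value Ecl Eθ Gθ Gcu C a1 b1
  clear hh e1 int1 i1 e2 int2 i2 e3 int3 i3 e4 int4 intIoiθ intIoicl split1 split2 split3
  clear hβ hγ hexpε hclθ hθcu hcl hσ hε hEcl hEθd hGθ hGcu hC ha1 hb1 hα0 hα1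
  field_simp
  ring

lemma hasDerivAt_exp_lin (r s θ : ℝ) :
    HasDerivAt (fun t => Real.exp (r*(s-t))) (-r * Real.exp (r*(s-θ))) θ := by
  have h1 : HasDerivAt (fun t : ℝ => r*(s-t)) (-r) θ := by
    simpa using ((hasDerivAt_id θ).const_sub s).const_mul r
  simpa [mul_comm] using h1.exp

lemma hasDerivAt_exp_lin2 (r s θ : ℝ) :
    HasDerivAt (fun t => Real.exp (r*(t-s))) (r * Real.exp (r*(θ-s))) θ := by
  have h1 : HasDerivAt (fun t : ℝ => r*(t-s)) r θ := by
    simpa using ((hasDerivAt_id θ).sub_const s).const_mul r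
  simpa [mul_comm] using h1.exp

noncomputable def Faux' (α σ ε cl cu θ : ℝ) : ℝ :=
  (α/((cu-cl)*((Real.exp ε + 1) / (Real.exp ε - 1)))) *
    (Real.exp (((1-α)/σ)*(cu-θ)) - Real.exp (((1-α)/σ)*(cl-θ)))

noncomputable def Faux'' (α σ ε cl cu θ : ℝ) : ℝ :=
  (α*(1-α)/(σ*(cu-cl)*((Real.exp ε + 1) / (Real.exp ε - 1)))) *
    (Real.exp (((1-α)/σ)*(cl-θ)) - Real.exp (((1-α)/σ)*(cu-θ)))

noncomputable def Gaux' (α σ ε cl cu θ : ℝ) : ℝ :=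
  (1/((cu-cl)*((Real.exp ε + 1) / (Real.exp ε - 1)))) *
    (1 - α*Real.exp (((1-α)/σ)*(cl-θ)) - (1-α)*Real.exp ((α/σ)*(θ-cu)))

noncomputable def Gaux'' (α σ ε cl cu θ : ℝ) : ℝ :=
  (α*(1-α)/(σ*(cu-cl)*((Real.exp ε + 1) / (Real.exp ε - 1)))) *
    (Real.exp (((1-α)/σ)*(cl-θ)) - Real.exp ((α/σ)*(θ-cu)))

lemma hasDerivAt_Faux {α σ ε cl cu : ℝ} (θ : ℝ) (hα : α ∈ Set.Ioo (0:ℝ) 1) (hσ : 0 < σ)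
    (hε : 0 < ε) (hcl : cl < cu) :
    HasDerivAt (Faux α σ ε cl cu) (Faux' α σ ε cl cu θ) θ := by
  have h7 : (1:ℝ) - α ≠ 0 := by linarith [hα.2]
  have h6 : σ ≠ 0 := hσ.ne'
  have h := (((hasDerivAt_exp_lin ((1-α)/σ) cl θ).sub
      (hasDerivAt_exp_lin ((1-α)/σ) cu θ)).const_mul
      ((α * σ / (1 - α)) * (1 / (((Real.exp ε + 1) / (Real.exp ε - 1)) * (cu - cl))))).const_add
      (1/2 + 1 / (2 * ((Real.exp ε + 1) / (Real.exp ε - 1))))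
  refine h.congr_deriv ?_
  unfold Faux'
  set A := Real.exp (((1-α)/σ)*(cl-θ))
  set B := Real.exp (((1-α)/σ)*(cu-θ))
  clear_value A B
  have hexpε : 1 < Real.exp ε := by rw [← Real.exp_zero]; exact Real.exp_lt_exp.mpr hε
  have h3 : Real.exp ε - 1 ≠ 0 := by linarith
  have h4 : Real.exp ε + 1 ≠ 0 := by positivity
  have h5 : cu - cl ≠ 0 := by linarith
  field_simp
  ring

lemma hasDerivAt_Faux' {α σ ε cl cu : ℝ} (θ : ℝ) (hα : α ∈ Set.Ioo (0:ℝ) 1) (hσ : 0 < σ)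
    (hε : 0 < ε) (hcl : cl < cu) :
    HasDerivAt (Faux' α σ ε cl cu) (Faux'' α σ ε cl cu θ) θ := by
  have h7 : (1:ℝ) - α ≠ 0 := by linarith [hα.2]
  have h6 : σ ≠ 0 := hσ.ne'
  have h := ((hasDerivAt_exp_lin ((1-α)/σ) cu θ).sub
      (hasDerivAt_exp_lin ((1-α)/σ) cl θ)).const_mul
      (α/((cu-cl)*((Real.exp ε + 1) / (Real.exp ε - 1))))
  refine h.congr_deriv ?_
  unfold Faux''
  set A := Real.exp (((1-α)/σ)*(cl-θ))
  set B := Real.exp (((1-α)/σ)*(cu-θ))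
  clear_value A B
  have hexpε : 1 < Real.exp ε := by rw [← Real.exp_zero]; exact Real.exp_lt_exp.mpr hε
  have h3 : Real.exp ε - 1 ≠ 0 := by linarith
  have h4 : Real.exp ε + 1 ≠ 0 := by positivity
  have h5 : cu - cl ≠ 0 := by linarith
  field_simp
  ring

lemma hasDerivAt_Gaux {α σ ε cl cu : ℝ} (θ : ℝ) (hα : α ∈ Set.Ioo (0:ℝ) 1) (hσ : 0 < σ)
    (hε : 0 < ε) (hcl : cl < cu) :
    HasDerivAt (Gaux α σ ε cl cu) (Gaux' α σ ε cl cu θ) θ := by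
  have h7 : (1:ℝ) - α ≠ 0 := by linarith [hα.2]
  have h8 : α ≠ 0 := hα.1.ne'
  have h6 : σ ≠ 0 := hσ.ne'
  have hlin : HasDerivAt (fun t : ℝ => 1/2 + (t - (cu+cl)/2)/((cu-cl) * ((Real.exp ε + 1) / (Real.exp ε - 1))))
      (1/((cu-cl) * ((Real.exp ε + 1) / (Real.exp ε - 1)))) θ := by
    have := (((hasDerivAt_id θ).sub_const ((cu+cl)/2)).div_const
      ((cu-cl) * ((Real.exp ε + 1) / (Real.exp ε - 1)))).const_add (1/2 : ℝ)
    simpa [one_div] using this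
  have hexp : HasDerivAt (fun t : ℝ => σ*(1-α)/α - σ*α/(1-α)
      + (σ*α/(1-α)) * Real.exp (((1-α)/σ)*(cl-t)) - (σ*(1-α)/α) * Real.exp ((α/σ)*(t-cu)))
      ((σ*α/(1-α)) * (-((1-α)/σ) * Real.exp (((1-α)/σ)*(cl-θ)))
        - (σ*(1-α)/α) * ((α/σ) * Real.exp ((α/σ)*(θ-cu)))) θ := by
    exact (((hasDerivAt_exp_lin ((1-α)/σ) cl θ).const_mul (σ*α/(1-α))).const_add
      (σ*(1-α)/α - σ*α/(1-α))).sub ((hasDerivAt_exp_lin2 (α/σ) cu θ).const_mul (σ*(1-α)/α))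
  have h := hlin.add (hexp.const_mul (1/((cu-cl) * ((Real.exp ε + 1) / (Real.exp ε - 1)))))
  refine h.congr_deriv ?_
  unfold Gaux'
  set A := Real.exp (((1-α)/σ)*(cl-θ))
  set E := Real.exp ((α/σ)*(θ-cu))
  clear_value A E
  have hexpε : 1 < Real.exp ε := by rw [← Real.exp_zero]; exact Real.exp_lt_exp.mpr hε
  have h3 : Real.exp ε - 1 ≠ 0 := by linarith
  have h4 : Real.exp ε + 1 ≠ 0 := by positivity
  have h5 : cu - cl ≠ 0 := by linarith
  field_simp
  ring

lemma hasDerivAt_Gaux' {α σ ε cl cu : ℝ} (θ : ℝ) (hα : α ∈ Set.Ioo (0:ℝ) 1) (hσ : 0 < σ)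
    (hε : 0 < ε) (hcl : cl < cu) :
    HasDerivAt (Gaux' α σ ε cl cu) (Gaux'' α σ ε cl cu θ) θ := by
  have h7 : (1:ℝ) - α ≠ 0 := by linarith [hα.2]
  have h8 : α ≠ 0 := hα.1.ne'
  have h6 : σ ≠ 0 := hσ.ne'
  have hexp : HasDerivAt (fun t : ℝ => 1 - α*Real.exp (((1-α)/σ)*(cl-t)) - (1-α)*Real.exp ((α/σ)*(t-cu)))
      (-(α * (-((1-α)/σ) * Real.exp (((1-α)/σ)*(cl-θ))))
        - (1-α) * ((α/σ) * Real.exp ((α/σ)*(θ-cu)))) θ := by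
    exact (((hasDerivAt_exp_lin ((1-α)/σ) cl θ).const_mul α).const_sub 1).sub
      ((hasDerivAt_exp_lin2 (α/σ) cu θ).const_mul (1-α))
  have h := hexp.const_mul (1/((cu-cl) * ((Real.exp ε + 1) / (Real.exp ε - 1))))
  refine h.congr_deriv ?_
  unfold Gaux''
  set A := Real.exp (((1-α)/σ)*(cl-θ))
  set E := Real.exp ((α/σ)*(θ-cu))
  clear_value A E
  have hexpε : 1 < Real.exp ε := by rw [← Real.exp_zero]; exact Real.exp_lt_exp.mpr hε
  have h3 : Real.exp ε - 1 ≠ 0 := by linarith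
  have h4 : Real.exp ε + 1 ≠ 0 := by positivity
  have h5 : cu - cl ≠ 0 := by linarith
  field_simp

lemma match0 {α σ ε cl cu : ℝ} (hα : α ∈ Set.Ioo (0:ℝ) 1) (hσ : 0 < σ)
    (hε : 0 < ε) (hcl : cl < cu) :
    Faux α σ ε cl cu cu = Gaux α σ ε cl cu cu := by
  have h7 : (1:ℝ) - α ≠ 0 := by linarith [hα.2]
  have h8 : α ≠ 0 := hα.1.ne'
  have h6 : σ ≠ 0 := hσ.ne'
  unfold Faux Gaux
  rw [show ((1-α)/σ)*(cu-cu) = 0 by ring, show (α/σ)*(cu-cu) = 0 by ring, Real.exp_zero]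
  set A := Real.exp (((1-α)/σ)*(cl-cu))
  clear_value A
  have hexpε : 1 < Real.exp ε := by rw [← Real.exp_zero]; exact Real.exp_lt_exp.mpr hε
  have h3 : Real.exp ε - 1 ≠ 0 := by linarith
  have h4 : Real.exp ε + 1 ≠ 0 := by positivity
  have h5 : cu - cl ≠ 0 := by linarith
  field_simp
  ring

lemma match1 {α σ ε cl cu : ℝ} (hα : α ∈ Set.Ioo (0:ℝ) 1) (hσ : 0 < σ)
    (hε : 0 < ε) (hcl : cl < cu) :
    Faux' α σ ε cl cu cu = Gaux' α σ ε cl cu cu := by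
  have h7 : (1:ℝ) - α ≠ 0 := by linarith [hα.2]
  have h8 : α ≠ 0 := hα.1.ne'
  have h6 : σ ≠ 0 := hσ.ne'
  unfold Faux' Gaux'
  rw [show ((1-α)/σ)*(cu-cu) = 0 by ring, show (α/σ)*(cu-cu) = 0 by ring, Real.exp_zero]
  ring

lemma match2 {α σ ε cl cu : ℝ} (hα : α ∈ Set.Ioo (0:ℝ) 1) (hσ : 0 < σ)
    (hε : 0 < ε) (hcl : cl < cu) :
    Faux'' α σ ε cl cu cu = Gaux'' α σ ε cl cu cu := by
  unfold Faux'' Gaux''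
  rw [show ((1-α)/σ)*(cu-cu) = 0 by ring, show (α/σ)*(cu-cu) = 0 by ring, Real.exp_zero]

lemma dPsi {α σ ε cl cu : ℝ} (θ : ℝ) (hα : α ∈ Set.Ioo (0:ℝ) 1) (hσ : 0 < σ)
    (hε : 0 < ε) (hcl : cl < cu) (hθ : cu ≤ θ) :
    HasDerivAt (Psi α σ ε cl cu) (Faux' α σ ε cl cu θ) θ := by
  rcases eq_or_lt_of_le hθ with rfl | hlt
  · have hR : HasDerivWithinAt (Psi α σ ε cl cu) (Faux' α σ ε cl cu cu) (Set.Ici cu) cu := by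
      refine ((hasDerivAt_Faux cu hα hσ hε hcl).hasDerivWithinAt).congr ?_ ?_
      · intro x hx; exact L1 x hα hσ hε hcl hx
      · exact L1 cu hα hσ hε hcl le_rfl
    have hL0 : HasDerivWithinAt (Psi α σ ε cl cu) (Gaux' α σ ε cl cu cu) (Set.Ioc cl cu) cu := by
      refine ((hasDerivAt_Gaux cu hα hσ hε hcl).hasDerivWithinAt).congr ?_ ?_
      · intro x hx; exact L2 x hα hσ hε hcl hx.1.le hx.2
      · exact L2 cu hα hσ hε hcl hcl.le le_rfl
    have hL : HasDerivWithinAt (Psi α σ ε cl cu) (Faux' α σ ε cl cu cu) (Set.Iic cu) cu := by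
      rw [match1 hα hσ hε hcl]
      exact hL0.mono_of_mem_nhdsWithin
        (mem_nhdsWithin.mpr ⟨Set.Ioi cl, isOpen_Ioi, hcl, fun x hx => ⟨hx.1, hx.2⟩⟩)
    have huniv := hL.union hR
    rw [Set.Iic_union_Ici] at huniv
    exact hasDerivWithinAt_univ.mp huniv
  · have hev : Psi α σ ε cl cu =ᶠ[nhds θ] Faux α σ ε cl cu :=
      Filter.eventuallyEq_of_mem (isOpen_Ioi.mem_nhds hlt)
        (fun x hx => L1 x hα hσ hε hcl (le_of_lt hx))
    exact (hasDerivAt_Faux θ hα hσ hε hcl).congr_of_eventuallyEq hev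

lemma derivPsi_eq_F {α σ ε cl cu : ℝ} (θ : ℝ) (hα : α ∈ Set.Ioo (0:ℝ) 1) (hσ : 0 < σ)
    (hε : 0 < ε) (hcl : cl < cu) (hθ : cu ≤ θ) :
    deriv (Psi α σ ε cl cu) θ = Faux' α σ ε cl cu θ :=
  (dPsi θ hα hσ hε hcl hθ).deriv

lemma derivPsi_eq_G {α σ ε cl cu : ℝ} (θ : ℝ) (hα : α ∈ Set.Ioo (0:ℝ) 1) (hσ : 0 < σ)
    (hε : 0 < ε) (hcl : cl < cu) (hθ : θ ∈ Set.Ioo cl cu) :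
    deriv (Psi α σ ε cl cu) θ = Gaux' α σ ε cl cu θ := by
  have hev : Psi α σ ε cl cu =ᶠ[nhds θ] Gaux α σ ε cl cu :=
    Filter.eventuallyEq_of_mem (isOpen_Ioo.mem_nhds hθ)
      (fun x hx => L2 x hα hσ hε hcl hx.1.le hx.2.le)
  exact ((hasDerivAt_Gaux θ hα hσ hε hcl).congr_of_eventuallyEq hev).deriv

lemma ddPsi {α σ ε cl cu : ℝ} (θ : ℝ) (hα : α ∈ Set.Ioo (0:ℝ) 1) (hσ : 0 < σ)
    (hε : 0 < ε) (hcl : cl < cu) (hθ : cu ≤ θ) :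
    HasDerivAt (deriv (Psi α σ ε cl cu)) (Faux'' α σ ε cl cu θ) θ := by
  rcases eq_or_lt_of_le hθ with rfl | hlt
  · have hR : HasDerivWithinAt (deriv (Psi α σ ε cl cu)) (Faux'' α σ ε cl cu cu) (Set.Ici cu) cu := by
      refine ((hasDerivAt_Faux' cu hα hσ hε hcl).hasDerivWithinAt).congr ?_ ?_
      · intro x hx; exact derivPsi_eq_F x hα hσ hε hcl hx
      · exact derivPsi_eq_F cu hα hσ hε hcl le_rfl
    have hL0 : HasDerivWithinAt (deriv (Psi α σ ε cl cu)) (Gaux'' α σ ε cl cu cu) (Set.Ioc cl cu) cu := by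
      refine ((hasDerivAt_Gaux' cu hα hσ hε hcl).hasDerivWithinAt).congr ?_ ?_
      · intro x hx
        rcases eq_or_lt_of_le hx.2 with heq | hxlt
        · subst heq
          rw [derivPsi_eq_F x hα hσ hε hcl le_rfl]
          exact match1 hα hσ hε hcl
        · exact derivPsi_eq_G x hα hσ hε hcl ⟨hx.1, hxlt⟩
      · rw [derivPsi_eq_F cu hα hσ hε hcl le_rfl]
        exact match1 hα hσ hε hcl
    have hL : HasDerivWithinAt (deriv (Psi α σ ε cl cu)) (Faux'' α σ ε cl cu cu) (Set.Iic cu) cu := by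
      rw [match2 hα hσ hε hcl]
      exact hL0.mono_of_mem_nhdsWithin
        (mem_nhdsWithin.mpr ⟨Set.Ioi cl, isOpen_Ioi, hcl, fun x hx => ⟨hx.1, hx.2⟩⟩)
    have huniv := hL.union hR
    rw [Set.Iic_union_Ici] at huniv
    exact hasDerivWithinAt_univ.mp huniv
  · have hev : deriv (Psi α σ ε cl cu) =ᶠ[nhds θ] Faux' α σ ε cl cu :=
      Filter.eventuallyEq_of_mem (isOpen_Ioi.mem_nhds hlt)
        (fun x hx => derivPsi_eq_F x hα hσ hε hcl (le_of_lt hx))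
    exact (hasDerivAt_Faux' θ hα hσ hε hcl).congr_of_eventuallyEq hev


/-- For `θ ≥ c_u`: the closed form of `Ψ_ε(θ)`; its derivative is strictly positive and
bounded by `α/(C_ε(c_u−c_l))`; its second derivative is strictly negative with absolute
value bounded by `α(1−α)/(σ C_ε(c_u−c_l))`. -/
theorem stmt11 (α σ ε cl cu θ : ℝ) (hα : α ∈ Set.Ioo (0:ℝ) 1) (hσ : 0 < σ)
    (hε : 0 < ε) (hcl : cl < cu) (hθ : cu ≤ θ) :
    Psi α σ ε cl cu θ =
      1/2 + 1 / (2 * ((Real.exp ε + 1) / (Real.exp ε - 1)))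
      + (α * σ / (1 - α)) * (1 / (((Real.exp ε + 1) / (Real.exp ε - 1)) * (cu - cl))) *
        (Real.exp (((1 - α) / σ) * (cl - θ)) - Real.exp (((1 - α) / σ) * (cu - θ))) ∧
    0 < deriv (Psi α σ ε cl cu) θ ∧
    deriv (Psi α σ ε cl cu) θ < α / (((Real.exp ε + 1) / (Real.exp ε - 1)) * (cu - cl)) ∧
    deriv (deriv (Psi α σ ε cl cu)) θ < 0 ∧
    |deriv (deriv (Psi α σ ε cl cu)) θ|
      < α * (1 - α) / (σ * ((Real.exp ε + 1) / (Real.exp ε - 1)) * (cu - cl)) := by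
  have hd : deriv (Psi α σ ε cl cu) θ = Faux' α σ ε cl cu θ := derivPsi_eq_F θ hα hσ hε hcl hθ
  have hdd : deriv (deriv (Psi α σ ε cl cu)) θ = Faux'' α σ ε cl cu θ := (ddPsi θ hα hσ hε hcl hθ).deriv
  have hexpε : 1 < Real.exp ε := by rw [← Real.exp_zero]; exact Real.exp_lt_exp.mpr hε
  have hC : 0 < (Real.exp ε + 1) / (Real.exp ε - 1) := div_pos (by positivity) (by linarith)
  have hLpos : (0:ℝ) < cu - cl := by linarith
  have hβ : 0 < (1-α)/σ := div_pos (by linarith [hα.2]) hσ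
  have hA : 0 < Real.exp (((1-α)/σ)*(cl-θ)) := Real.exp_pos _
  have hAB : Real.exp (((1-α)/σ)*(cl-θ)) < Real.exp (((1-α)/σ)*(cu-θ)) := by
    apply Real.exp_lt_exp.mpr
    apply mul_lt_mul_of_pos_left _ hβ
    linarith
  have hB : Real.exp (((1-α)/σ)*(cu-θ)) ≤ 1 := by
    calc Real.exp (((1-α)/σ)*(cu-θ)) ≤ Real.exp 0 :=
          Real.exp_le_exp.mpr (mul_nonpos_of_nonneg_of_nonpos hβ.le (by linarith))
      _ = 1 := Real.exp_zero
  have hcoef : 0 < α/((cu-cl)*((Real.exp ε + 1) / (Real.exp ε - 1))) :=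
    div_pos hα.1 (mul_pos hLpos hC)
  have hcoef2 : 0 < α*(1-α)/(σ*(cu-cl)*((Real.exp ε + 1) / (Real.exp ε - 1))) :=
    div_pos (mul_pos hα.1 (by linarith [hα.2])) (by positivity)
  refine ⟨L1 θ hα hσ hε hcl hθ, ?_, ?_, ?_, ?_⟩
  · rw [hd]; unfold Faux'
    exact mul_pos hcoef (by linarith)
  · rw [hd]; unfold Faux'
    calc (α/((cu-cl)*((Real.exp ε + 1) / (Real.exp ε - 1)))) *
          (Real.exp (((1-α)/σ)*(cu-θ)) - Real.exp (((1-α)/σ)*(cl-θ)))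
        < (α/((cu-cl)*((Real.exp ε + 1) / (Real.exp ε - 1)))) * 1 :=
          mul_lt_mul_of_pos_left (by linarith) hcoef
      _ = α / (((Real.exp ε + 1) / (Real.exp ε - 1)) * (cu - cl)) := by
          rw [mul_one, mul_comm (cu-cl)]
  · rw [hdd]; unfold Faux''
    exact mul_neg_of_pos_of_neg hcoef2 (by linarith)
  · rw [hdd]; unfold Faux''
    rw [abs_of_neg (mul_neg_of_pos_of_neg hcoef2 (by linarith))]
    rw [show -((α*(1-α)/(σ*(cu-cl)*((Real.exp ε + 1) / (Real.exp ε - 1)))) *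
        (Real.exp (((1-α)/σ)*(cl-θ)) - Real.exp (((1-α)/σ)*(cu-θ))))
      = (α*(1-α)/(σ*(cu-cl)*((Real.exp ε + 1) / (Real.exp ε - 1)))) *
        (Real.exp (((1-α)/σ)*(cu-θ)) - Real.exp (((1-α)/σ)*(cl-θ))) by ring]
    calc (α*(1-α)/(σ*(cu-cl)*((Real.exp ε + 1) / (Real.exp ε - 1)))) *
          (Real.exp (((1-α)/σ)*(cu-θ)) - Real.exp (((1-α)/σ)*(cl-θ)))
        < (α*(1-α)/(σ*(cu-cl)*((Real.exp ε + 1) / (Real.exp ε - 1)))) * 1 :=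
          mul_lt_mul_of_pos_left (by linarith) hcoef2
      _ = α * (1 - α) / (σ * ((Real.exp ε + 1) / (Real.exp ε - 1)) * (cu - cl)) := by
          rw [mul_one, mul_right_comm σ (cu-cl)]
end

section
/- Ψ_ε is strictly monotonically increasing on all of ℝ and is bounded away from 0 and 1; indeed 1/(e^ε+1) ≤ Ψ_ε(θ) ≤ e^ε/(e^ε+1) for all θ ∈ ℝ. -/
open MeasureTheory Set Real

lemma checkLoss_eq_max (α τ : ℝ) : checkLoss α τ = max ((α - 1) * τ) (α * τ) := by
  unfold checkLoss
  rcases le_or_gt τ 0 with h | h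
  · rw [if_pos h, max_eq_left (by nlinarith)]
  · rw [if_neg (not_le.2 h), max_eq_right (by nlinarith)]

lemma continuous_aLap (α θ σ : ℝ) : Continuous (aLap α θ σ) := by
  unfold aLap
  simp only [checkLoss_eq_max]
  fun_prop

lemma integral_exp_neg_mul_Ioi {b : ℝ} (hb : 0 < b) :
    ∫ x in Ioi (0:ℝ), Real.exp (-(b * x)) = b⁻¹ := by
  have := MeasureTheory.integral_comp_mul_left_Ioi (fun x => Real.exp (-x)) 0 hb
  simp only [mul_zero, integral_exp_neg_Ioi_zero, smul_eq_mul, mul_one] at this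
  simpa using this

lemma integrableOn_exp_neg_mul_Ici {b : ℝ} (hb : 0 < b) :
    IntegrableOn (fun x : ℝ => Real.exp (-b * x)) (Ici 0) := by
  rw [integrableOn_Ici_iff_integrableOn_Ioi]
  exact exp_neg_integrableOn_Ioi 0 hb

lemma integrableOn_exp_mul_Iic' {b : ℝ} (hb : 0 < b) :
    IntegrableOn (fun x : ℝ => Real.exp (b * x)) (Iic 0) := by
  rw [← (Measure.measurePreserving_neg (volume : Measure ℝ)).integrableOn_comp_preimage
      (Homeomorph.neg ℝ).measurableEmbedding]
  simp only [Function.comp_def, neg_preimage, neg_Iic, neg_zero, mul_neg, ← neg_mul]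
  exact integrableOn_exp_neg_mul_Ici hb

lemma integral_exp_mul_Iic' {b : ℝ} (hb : 0 < b) :
    ∫ x in Iic (0:ℝ), Real.exp (b * x) = b⁻¹ := by
  rw [show Iic (0:ℝ) = Iic (-0) by norm_num, ← integral_comp_neg_Ioi]
  calc ∫ x in Ioi (0:ℝ), Real.exp (b * -x)
      = ∫ x in Ioi (0:ℝ), Real.exp (-(b * x)) := by simp [mul_neg]
    _ = b⁻¹ := integral_exp_neg_mul_Ioi hb


section
variable {α σ : ℝ} (hα : α ∈ Set.Ioo (0:ℝ) 1) (hσ : 0 < σ)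
include hα hσ

lemma aLap0_pos : ∀ x, 0 < aLap α 0 σ x := fun x =>
  mul_pos (div_pos (mul_pos hα.1 (by linarith [hα.2])) hσ) (exp_pos _)

lemma aLap0_Iic : ∀ x ∈ Iic (0:ℝ),
    aLap α 0 σ x = α * (1 - α) / σ * Real.exp ((1 - α) / σ * x) := by
  intro x hx
  unfold aLap checkLoss
  rw [sub_zero, if_pos (div_nonpos_iff.2 (Or.inr ⟨hx, hσ.le⟩))]
  ring_nf

lemma aLap0_Ioi : ∀ x ∈ Ioi (0:ℝ),
    aLap α 0 σ x = α * (1 - α) / σ * Real.exp (-(α / σ) * x) := by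
  intro x hx
  unfold aLap checkLoss
  rw [sub_zero, if_neg (by push_neg; exact div_pos hx hσ)]
  ring_nf

lemma integrableOn_aLap0_Iic : IntegrableOn (aLap α 0 σ) (Iic 0) := by
  have hb : 0 < (1 - α) / σ := div_pos (by linarith [hα.2]) hσ
  have h1 : IntegrableOn (fun x => α * (1 - α) / σ * Real.exp ((1 - α) / σ * x)) (Iic 0) :=
    (integrableOn_exp_mul_Iic' hb).const_mul _
  exact h1.congr_fun (fun x hx => (aLap0_Iic hα hσ x hx).symm) measurableSet_Iic

lemma integrableOn_aLap0_Ioi : IntegrableOn (aLap α 0 σ) (Ioi 0) := by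
  have hb : 0 < α / σ := div_pos hα.1 hσ
  have h1 : IntegrableOn (fun x => α * (1 - α) / σ * Real.exp (-(α / σ) * x)) (Ioi 0) :=
    (exp_neg_integrableOn_Ioi 0 hb).const_mul _
  exact h1.congr_fun (fun x hx => (aLap0_Ioi hα hσ x hx).symm) measurableSet_Ioi

lemma integrable_aLap0 : Integrable (aLap α 0 σ) := by
  rw [← integrableOn_univ, ← Iic_union_Ioi (a := (0:ℝ)), integrableOn_union]
  exact ⟨integrableOn_aLap0_Iic hα hσ, integrableOn_aLap0_Ioi hα hσ⟩

lemma integral_aLap0 : ∫ x, aLap α 0 σ x = 1 := by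
  have hb1 : 0 < (1 - α) / σ := div_pos (by linarith [hα.2]) hσ
  have hb2 : 0 < α / σ := div_pos hα.1 hσ
  rw [← intervalIntegral.integral_Iic_add_Ioi (integrableOn_aLap0_Iic hα hσ) (integrableOn_aLap0_Ioi hα hσ)]
  rw [setIntegral_congr_fun measurableSet_Iic (aLap0_Iic hα hσ),
      setIntegral_congr_fun measurableSet_Ioi (aLap0_Ioi hα hσ)]
  rw [MeasureTheory.integral_const_mul, MeasureTheory.integral_const_mul,
      integral_exp_mul_Iic' hb1]
  have : ∫ x in Ioi (0:ℝ), Real.exp (-(α/σ) * x) = (α/σ)⁻¹ := by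
    simpa [neg_mul] using integral_exp_neg_mul_Ioi hb2
  rw [this]
  have h1 : α ≠ 0 := ne_of_gt hα.1
  have h2 : (1:ℝ) - α ≠ 0 := sub_ne_zero.2 (ne_of_gt hα.2)
  have h3 : σ ≠ 0 := ne_of_gt hσ
  field_simp
  ring

end

section bit
variable {ε cl cu : ℝ} (hε : 0 < ε) (hcl : cl < cu)
include hε hcl

lemma one_lt_E : 1 < Real.exp ε := by
  have := Real.exp_lt_exp.2 hε
  rwa [Real.exp_zero] at this

lemma denom_pos : 0 < (cu - cl) * ((Real.exp ε + 1) / (Real.exp ε - 1)) := by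
  have hE := one_lt_E hε (cl := cl) (cu := cu) hcl
  apply mul_pos (by linarith)
  exact div_pos (by linarith) (by linarith)

lemma bitp_lt_bitp {v w : ℝ} (h : v < w) : bitp ε cl cu v < bitp ε cl cu w := by
  unfold bitp
  have hd := denom_pos hε hcl
  gcongr

lemma bitp_le_bitp {v w : ℝ} (h : v ≤ w) : bitp ε cl cu v ≤ bitp ε cl cu w := by
  rcases eq_or_lt_of_le h with rfl | h
  · exact le_refl _
  · exact (bitp_lt_bitp hε hcl h).le

lemma bitp_cl : bitp ε cl cu cl = 1 / (Real.exp ε + 1) := by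
  have hE := one_lt_E hε (cl := cl) (cu := cu) hcl
  unfold bitp
  have h1 : cu - cl ≠ 0 := by linarith
  have h2 : Real.exp ε - 1 ≠ 0 := by linarith
  have h3 : Real.exp ε + 1 ≠ 0 := by linarith
  field_simp
  ring

lemma bitp_cu : bitp ε cl cu cu = Real.exp ε / (Real.exp ε + 1) := by
  have hE := one_lt_E hε (cl := cl) (cu := cu) hcl
  unfold bitp
  have h1 : cu - cl ≠ 0 := by linarith
  have h2 : Real.exp ε - 1 ≠ 0 := by linarith
  have h3 : Real.exp ε + 1 ≠ 0 := by linarith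
  field_simp
  ring

lemma trunc_eq (y : ℝ) : trunc cl cu y = max cl (min cu y) := by
  unfold trunc
  split_ifs with h1 h2
  · rw [min_eq_right (by linarith), max_eq_left h1]
  · rw [min_eq_left (by linarith), max_eq_right (by linarith)]
  · rw [min_eq_right (by linarith), max_eq_right (by linarith)]

lemma trunc_mem (y : ℝ) : trunc cl cu y ∈ Set.Icc cl cu := by
  rw [trunc_eq hε hcl]
  constructor
  · exact le_max_left _ _
  · exact max_le hcl.le (min_le_left _ _)

lemma trunc_lt_trunc {a b : ℝ} (hab : a < b) (ha : a < cu) (hb : cl < b) :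
    trunc cl cu a < trunc cl cu b := by
  rw [trunc_eq hε hcl, trunc_eq hε hcl, min_eq_right ha.le |> congrArg (max cl)]
  have h1 : max cl a < min cu b := by
    apply lt_min
    · exact max_lt hcl ha
    · exact max_lt hb hab
  calc max cl a < min cu b := h1
    _ ≤ max cl (min cu b) := le_max_right _ _

lemma continuous_g : Continuous (fun y => bitp ε cl cu (trunc cl cu y)) := by
  have : (fun y => trunc cl cu y) = fun y => max cl (min cu y) := funext (trunc_eq hε hcl)
  simp only [bitp, this]
  fun_prop

end bit

noncomputable def gfun (ε cl cu y : ℝ) : ℝ := bitp ε cl cu (trunc cl cu y)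

section main
variable {α σ ε cl cu : ℝ} (hα : α ∈ Set.Ioo (0:ℝ) 1) (hσ : 0 < σ)
  (hε : 0 < ε) (hcl : cl < cu)
include hα hσ hε hcl

lemma gfun_bounds (y : ℝ) : 1 / (Real.exp ε + 1) ≤ gfun ε cl cu y ∧
    gfun ε cl cu y ≤ Real.exp ε / (Real.exp ε + 1) := by
  obtain ⟨h1, h2⟩ := trunc_mem hε hcl y
  constructor
  · rw [← bitp_cl hε hcl]; exact bitp_le_bitp hε hcl h1
  · rw [← bitp_cu hε hcl]; exact bitp_le_bitp hε hcl h2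

lemma integrable_prod (θ : ℝ) :
    Integrable (fun x => gfun ε cl cu (x + θ) * aLap α 0 σ x) := by
  apply Integrable.bdd_mul (c := Real.exp ε / (Real.exp ε + 1)) (integrable_aLap0 hα hσ)
  · exact ((continuous_g hε hcl).comp (by fun_prop)).aestronglyMeasurable
  · refine Filter.Eventually.of_forall (fun x => ?_)
    have hE := one_lt_E hε (cl := cl) (cu := cu) hcl
    have := gfun_bounds hα hσ hε hcl (x + θ)
    rw [Real.norm_eq_abs, abs_of_nonneg (le_trans (by positivity) this.1)]
    exact this.2

lemma Psi_eq (θ : ℝ) :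
    Psi α σ ε cl cu θ = ∫ x, gfun ε cl cu (x + θ) * aLap α 0 σ x := by
  have key := MeasureTheory.integral_add_right_eq_self (μ := volume)
      (fun z => gfun ε cl cu z * aLap α 0 σ (z - θ)) θ
  simp only [add_sub_cancel_right] at key
  rw [← key.symm]
  unfold Psi gfun
  congr 1
  funext z
  simp [aLap, sub_zero]

end main

/-- `Ψ_ε` is strictly monotonically increasing on all of `ℝ` and is bounded away
from `0` and `1`: `1/(e^ε+1) ≤ Ψ_ε(θ) ≤ e^ε/(e^ε+1)` for all `θ`. -/
theorem stmt13 (α σ ε cl cu : ℝ) (hα : α ∈ Set.Ioo (0:ℝ) 1) (hσ : 0 < σ)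
    (hε : 0 < ε) (hcl : cl < cu) :
    StrictMono (Psi α σ ε cl cu) ∧
    ∀ θ, 1 / (Real.exp ε + 1) ≤ Psi α σ ε cl cu θ ∧
      Psi α σ ε cl cu θ ≤ Real.exp ε / (Real.exp ε + 1) := by
  have hE := one_lt_E hε (cl := cl) (cu := cu) hcl
  constructor
  · intro θ1 θ2 hθ
    rw [Psi_eq hα hσ hε hcl, Psi_eq hα hσ hε hcl]
    have hi1 := integrable_prod hα hσ hε hcl θ1
    have hi2 := integrable_prod hα hσ hε hcl θ2
    have hDeq : (fun x => (gfun ε cl cu (x + θ2) - gfun ε cl cu (x + θ1)) * aLap α 0 σ x)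
        = fun x => gfun ε cl cu (x + θ2) * aLap α 0 σ x
            - gfun ε cl cu (x + θ1) * aLap α 0 σ x := funext fun x => sub_mul _ _ _
    have key : 0 < ∫ x, (gfun ε cl cu (x + θ2) - gfun ε cl cu (x + θ1)) * aLap α 0 σ x := by
      rw [MeasureTheory.integral_pos_iff_support_of_nonneg]
      · refine lt_of_lt_of_le ?_ (measure_mono (?_ :
          Set.Ioo (cl - θ2) (cu - θ1) ⊆ Function.support _))
        · rw [Real.volume_Ioo]
          apply ENNReal.ofReal_pos.2
          linarith
        · intro x hx
          obtain ⟨hx1, hx2⟩ := hx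
          have hg : gfun ε cl cu (x + θ1) < gfun ε cl cu (x + θ2) := by
            apply bitp_lt_bitp hε hcl
            exact trunc_lt_trunc hε hcl (hab := by linarith) (ha := by linarith)
              (hb := by linarith)
          exact ne_of_gt (mul_pos (by linarith) (aLap0_pos hα hσ x))
      · intro x
        have hg : gfun ε cl cu (x + θ1) ≤ gfun ε cl cu (x + θ2) := by
          apply bitp_le_bitp hε hcl
          rw [trunc_eq hε hcl, trunc_eq hε hcl]
          exact max_le_max le_rfl (min_le_min le_rfl (by linarith))
        exact mul_nonneg (by linarith) (aLap0_pos hα hσ x).le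
      · rw [hDeq]; exact hi2.sub hi1
    rw [hDeq, MeasureTheory.integral_sub hi2 hi1] at key
    linarith
  · intro θ
    rw [Psi_eq hα hσ hε hcl]
    have hf0 := integrable_aLap0 hα hσ
    have hint := integrable_prod hα hσ hε hcl θ
    constructor
    · have h1 : ∫ x, 1 / (Real.exp ε + 1) * aLap α 0 σ x
          ≤ ∫ x, gfun ε cl cu (x + θ) * aLap α 0 σ x :=
        MeasureTheory.integral_mono (hf0.const_mul _) hint fun x =>
          mul_le_mul_of_nonneg_right (gfun_bounds hα hσ hε hcl (x + θ)).1
            (aLap0_pos hα hσ x).le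
      rwa [MeasureTheory.integral_const_mul, integral_aLap0 hα hσ, mul_one] at h1
    · have h1 : ∫ x, gfun ε cl cu (x + θ) * aLap α 0 σ x
          ≤ ∫ x, Real.exp ε / (Real.exp ε + 1) * aLap α 0 σ x :=
        MeasureTheory.integral_mono hint (hf0.const_mul _) fun x =>
          mul_le_mul_of_nonneg_right (gfun_bounds hα hσ hε hcl (x + θ)).2
            (aLap0_pos hα hσ x).le
      rwa [MeasureTheory.integral_const_mul, integral_aLap0 hα hσ, mul_one] at h1
end
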